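/- Let R be a commutative Noetherian ring and let M be an R-module with qid_R M = 0. If x ∈ R is an R-regular element (a non-zerodivisor on R), then M is x-divisible, i.e., xM = M. -/
import Mathlib


/-!
Background definitions: quasi-injective resolutions and quasi-injective dimension
(following Gheibi), Ext-finiteness (following Enochs–Jenda), and related invariants.
-/

open CategoryTheory CategoryTheory.Limits
open scoped Pointwise

universe u

/-- A bounded-above complex `I` of injective `R`-modules is a *quasi-injective resolution*
of `M` if there are natural numbers `b i`, not all zero, with `Hᵢ(I) ≅ M^{⊕ b i}` for all
`i` (above the top of the complex the homology vanishes, so there the requirement holds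
automatically with `b i = 0`). -/
structure IsQuasiInjectiveResolution (R : Type u) [CommRing R] (M : ModuleCat.{u} R)
    (I : ChainComplex (ModuleCat.{u} R) ℤ) : Prop where
  injective : ∀ i : ℤ, Injective (I.X i)
  bounded_above : ∃ s : ℤ, ∀ i : ℤ, s < i → IsZero (I.X i)
  homology_iso : ∃ b : ℤ → ℕ, (∃ i, b i ≠ 0) ∧
    ∀ i : ℤ, Nonempty ((I.homology i) ≅ ModuleCat.of R (Fin (b i) → M))

/-- A complex indexed by `ℤ` is bounded if its modules vanish outside a finite range. -/
def ComplexIsBounded (R : Type u) [CommRing R] (I : ChainComplex (ModuleCat.{u} R) ℤ) :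
    Prop :=
  ∃ lo hi : ℤ, ∀ i : ℤ, (i < lo ∨ hi < i) → IsZero (I.X i)

/-- The quasi-injective dimension of a (nonzero) module `M`: the infimum, over all bounded
quasi-injective resolutions `I` of `M`, of `hinf I - inf I`, where
`hinf I = inf {i | Hᵢ(I) ≠ 0}` and `inf I = inf {i | Iᵢ ≠ 0}`.  A bounded complex `I` with
nonvanishing homology satisfies `hinf I - inf I ≤ n` exactly when there is some `j` with
`Hⱼ(I) ≠ 0` and `Iᵢ = 0` for all `i < j - n`, which is how the quantity is encoded below.
The value is `⊤` if `M` admits no bounded quasi-injective resolution. -/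
noncomputable def qid (R : Type u) [CommRing R] (M : ModuleCat.{u} R) : ℕ∞ :=
  sInf {n : ℕ∞ | ∃ m : ℕ, n = m ∧ ∃ I : ChainComplex (ModuleCat.{u} R) ℤ,
    IsQuasiInjectiveResolution R M I ∧ ComplexIsBounded R I ∧
    ∃ j : ℤ, ¬ IsZero (I.homology j) ∧ ∀ i : ℤ, i < j - m → IsZero (I.X i)}

/-- `Ext_R^i(N, M)`. -/
noncomputable def extRMod (R : Type u) [CommRing R] (N M : ModuleCat.{u} R) (i : ℕ) :
    ModuleCat.{u} R :=
  ((Ext R (ModuleCat.{u} R) i).obj (Opposite.op N)).obj M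

/-- `M` is Ext-finite if `Ext_R^i(N, M)` is a finitely generated `R`-module for every
finitely generated `R`-module `N` and every `i ≥ 1`. -/
def ExtFinite (R : Type u) [CommRing R] (M : ModuleCat.{u} R) : Prop :=
  ∀ N : ModuleCat.{u} R, Module.Finite R N → ∀ i : ℕ, 1 ≤ i →
    Module.Finite R (extRMod R N M i)

/-- **Lemma 3.7(1).** Over a Noetherian ring `R`, if `qid_R M = 0` and `x ∈ R` is an
`R`-regular element (a non-zerodivisor on `R`), then `M` is `x`-divisible: `xM = M`. -/
theorem divisible_of_qid_eq_zero (R : Type u) [CommRing R] [IsNoetherianRing R]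
    (M : ModuleCat.{u} R) (h0 : qid R M = 0) (x : R) (hx : IsSMulRegular R x) :
    ∀ m : ↥M, ∃ m' : ↥M, x • m' = m := by
  intro m
  rw [qid] at h0
  set S : Set ℕ∞ := {n : ℕ∞ | ∃ m : ℕ, n = m ∧ ∃ I : ChainComplex (ModuleCat.{u} R) ℤ,
    IsQuasiInjectiveResolution R M I ∧ ComplexIsBounded R I ∧
    ∃ j : ℤ, ¬ IsZero (I.homology j) ∧ ∀ i : ℤ, i < j - m → IsZero (I.X i)} with hS
  have hmem : (0 : ℕ∞) ∈ S := by
    by_contra hc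
    have h1 : (1 : ℕ∞) ≤ sInf S := by
      apply le_sInf
      intro a ha
      rcases eq_or_ne a 0 with rfl | hne
      · exact absurd ha hc
      · exact ENat.one_le_iff_ne_zero.mpr hne
    rw [h0] at h1
    exact absurd h1 (by norm_num)
  obtain ⟨m0, hm0, I, res, -, j, hj, hzero⟩ := hmem
  have hm0' : m0 = 0 := by exact_mod_cast hm0.symm
  subst hm0'
  haveI : Injective (I.X j) := res.injective j
  -- the differential out of degree j is zero
  have hd : I.d j (j - 1) = 0 := by
    refine (hzero (j - 1) ?_).eq_of_tgt _ _
    push_cast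
    omega
  -- an epimorphism from I.X j onto the homology at j
  let π : I.X j ⟶ I.homology j :=
    (I.iCyclesIso j (j - 1) (ChainComplex.next ℤ j) hd).inv ≫ I.homologyπ j
  haveI : Epi π := epi_comp _ _
  have hsurj : Function.Surjective π := (ModuleCat.epi_iff_surjective π).mp inferInstance
  -- the injective module I.X j is x-divisible
  have hdivI : ∀ n : I.X j, ∃ n' : I.X j, x • n' = n := by
    intro n
    let f : ModuleCat.of R R ⟶ ModuleCat.of R R := ModuleCat.ofHom (LinearMap.lsmul R R x)
    haveI : Mono f := (ModuleCat.mono_iff_injective f).mpr hx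
    let g : ModuleCat.of R R ⟶ I.X j :=
      ModuleCat.ofHom (LinearMap.toSpanSingleton R _ n)
    obtain ⟨h, hh⟩ := Injective.factors g f
    let one : ↥(ModuleCat.of R R) := (1 : R)
    refine ⟨h one, ?_⟩
    have h1 : h (f one) = g one := by rw [← hh]; rfl
    have hf : f one = x • one := rfl
    have hg : g one = n := one_smul R n
    rw [hf, map_smul, hg] at h1
    exact h1
  -- hence the homology at j is x-divisible
  have hdivH : ∀ h₀ : I.homology j, ∃ h₁ : I.homology j, x • h₁ = h₀ := by
    intro h₀
    obtain ⟨n, hn⟩ := hsurj h₀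
    obtain ⟨n', hn'⟩ := hdivI n
    exact ⟨π n', by rw [← hn, ← hn', map_smul]⟩
  obtain ⟨b, -, hbiso⟩ := res.homology_iso
  obtain ⟨e⟩ := hbiso j
  -- b j ≠ 0
  have hb : b j ≠ 0 := by
    intro hb0
    apply hj
    rw [hb0] at e
    haveI : Subsingleton (Fin 0 → ↥M) := inferInstance
    exact (ModuleCat.isZero_of_subsingleton (ModuleCat.of R (Fin 0 → ↥M))).of_iso e
  -- transport divisibility to M^{b j} and project to a coordinate
  let v : ModuleCat.of R (Fin (b j) → ↥M) := fun _ => m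
  obtain ⟨h₁, hh₁⟩ := hdivH (e.inv v)
  refine ⟨(e.hom h₁) ⟨0, Nat.pos_of_ne_zero hb⟩, ?_⟩
  have : x • (e.hom h₁) = v := by
    rw [← map_smul, hh₁]
    exact e.inv_hom_id_apply v
  calc x • (e.hom h₁) ⟨0, Nat.pos_of_ne_zero hb⟩
      = (x • e.hom h₁) ⟨0, Nat.pos_of_ne_zero hb⟩ := rfl
    _ = m := by rw [this]
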